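/- arXiv:2207.08038 — 13 statements merged into one kernel-verified Lean document; each statement's English description precedes it below -/
import Mathlib

section
/- Let A be an n×m complex matrix, X an n×p complex matrix, and Y an m×q complex matrix. Define F := Yᴴ A⁺ X, where A⁺ denotes the Moore–Penrose pseudoinverse and ᴴ the conjugate transpose. Then the following are equivalent: (a) the subspace (A⁺)ᴴ·im(Y) + im(X)^⊥ equals ℂⁿ; (b) ((A⁺)ᴴ·im(Y))^⊥ ∩ im(X) = {0}; (c) ker(F) = ker(X). -/
open Matrix

def IsMPInv {m n : Type*} [Fintype m] [Fintype n] (A : Matrix m n ℂ) (Z : Matrix n m ℂ) : Prop :=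
  A * Z * A = A ∧ Z * A * Z = Z ∧ (A * Z)ᴴ = A * Z ∧ (Z * A)ᴴ = Z * A

/-!
Write `T = (A⁺)ᴴ·im Y`, the range of `M = (A⁺)ᴴ Y`. Taking orthogonal complements, (a) says
`(T + (im X)ᗮ)ᗮ = Tᗮ ∩ im X` is zero, which is (b). Since `F = Mᴴ X` and `ker Mᴴ = Tᗮ`,
`ker F` is the preimage of `Tᗮ` under `X`, and it equals `ker X` exactly when `Tᗮ` meets `im X`
only in `0`.
-/

theorem Submodule.comap_eq_ker_iff {R M N : Type*} [Ring R] [AddCommGroup M] [AddCommGroup N]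
    [Module R M] [Module R N] (f : M →ₗ[R] N) (S : Submodule R N) :
    S.comap f = LinearMap.ker f ↔ S ⊓ LinearMap.range f = ⊥ := by
  rw [le_antisymm_iff, and_iff_left (LinearMap.ker_le_comap f), LinearMap.le_ker_iff_map,
    Submodule.map_comap_eq, inf_comm]

section InnerProductSpace

variable {𝕜 E G H : Type*} [RCLike 𝕜] [NormedAddCommGroup E] [InnerProductSpace 𝕜 E]
  [NormedAddCommGroup G] [InnerProductSpace 𝕜 G] [AddCommGroup H] [Module 𝕜 H]
  [FiniteDimensional 𝕜 E]

theorem Submodule.sup_orthogonal_eq_top_iff (T R : Submodule 𝕜 E) :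
    T ⊔ Rᗮ = ⊤ ↔ Tᗮ ⊓ R = ⊥ := by
  rw [← Submodule.orthogonal_eq_bot_iff, ← Submodule.inf_orthogonal,
    Submodule.orthogonal_orthogonal]

theorem LinearMap.ker_adjoint_comp_eq_ker_iff [FiniteDimensional 𝕜 G] (f : G →ₗ[𝕜] E)
    (g : H →ₗ[𝕜] E) :
    LinearMap.ker (f.adjoint ∘ₗ g) = LinearMap.ker g ↔
      (LinearMap.range f)ᗮ ⊓ LinearMap.range g = ⊥ := by
  rw [LinearMap.ker_comp, ← LinearMap.orthogonal_range, Submodule.comap_eq_ker_iff]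

end InnerProductSpace

theorem stmt0_general {n m p q : ℕ}
    (X : Matrix (Fin n) (Fin p) ℂ)
    (Y : Matrix (Fin m) (Fin q) ℂ) (Ap : Matrix (Fin m) (Fin n) ℂ)
    (F : Matrix (Fin q) (Fin p) ℂ) (hF : F = Yᴴ * Ap * X) :
    ((Submodule.map (Matrix.toEuclideanLin Apᴴ)
        (LinearMap.range (Matrix.toEuclideanLin Y))) ⊔
      (LinearMap.range (Matrix.toEuclideanLin X))ᗮ = ⊤
      ↔ (Submodule.map (Matrix.toEuclideanLin Apᴴ)
        (LinearMap.range (Matrix.toEuclideanLin Y)))ᗮ ⊓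
        LinearMap.range (Matrix.toEuclideanLin X) = ⊥)
    ∧ ((Submodule.map (Matrix.toEuclideanLin Apᴴ)
        (LinearMap.range (Matrix.toEuclideanLin Y))) ⊔
      (LinearMap.range (Matrix.toEuclideanLin X))ᗮ = ⊤
      ↔ LinearMap.ker (Matrix.toEuclideanLin F) = LinearMap.ker (Matrix.toEuclideanLin X)) := by
  have hmap : Submodule.map Apᴴ.toEuclideanLin (LinearMap.range Y.toEuclideanLin) =
      LinearMap.range (Apᴴ * Y).toEuclideanLin := by
    rw [Matrix.toLpLin_mul_same, LinearMap.range_comp]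
  have hF' : F.toEuclideanLin = (Apᴴ * Y).toEuclideanLin.adjoint ∘ₗ X.toEuclideanLin := by
    rw [← Matrix.toEuclideanLin_conjTranspose_eq_adjoint, ← Matrix.toLpLin_mul_same, hF,
      conjTranspose_mul, conjTranspose_conjTranspose]
  rw [hmap, hF', LinearMap.ker_adjoint_comp_eq_ker_iff]
  exact ⟨Submodule.sup_orthogonal_eq_top_iff _ _, Submodule.sup_orthogonal_eq_top_iff _ _⟩

/-- For `F = Yᴴ A⁺ X`, the conditions (a) `(A⁺)ᴴ·im(Y) + im(X)ᗮ = ℂⁿ`,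
(b) `((A⁺)ᴴ·im(Y))ᗮ ∩ im(X) = {0}`, and (c) `ker F = ker X` are equivalent. -/
theorem stmt0 {n m p q : ℕ}
    (A : Matrix (Fin n) (Fin m) ℂ) (X : Matrix (Fin n) (Fin p) ℂ)
    (Y : Matrix (Fin m) (Fin q) ℂ) (Ap : Matrix (Fin m) (Fin n) ℂ)
    (hAp : IsMPInv A Ap) (F : Matrix (Fin q) (Fin p) ℂ) (hF : F = Yᴴ * Ap * X) :
    ((Submodule.map (Matrix.toEuclideanLin Apᴴ)
        (LinearMap.range (Matrix.toEuclideanLin Y))) ⊔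
      (LinearMap.range (Matrix.toEuclideanLin X))ᗮ = ⊤
      ↔ (Submodule.map (Matrix.toEuclideanLin Apᴴ)
        (LinearMap.range (Matrix.toEuclideanLin Y)))ᗮ ⊓
        LinearMap.range (Matrix.toEuclideanLin X) = ⊥)
    ∧ ((Submodule.map (Matrix.toEuclideanLin Apᴴ)
        (LinearMap.range (Matrix.toEuclideanLin Y))) ⊔
      (LinearMap.range (Matrix.toEuclideanLin X))ᗮ = ⊤
      ↔ LinearMap.ker (Matrix.toEuclideanLin F) = LinearMap.ker (Matrix.toEuclideanLin X)) :=
  stmt0_general X Y Ap F hF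
end

section
/- Let P₁ and P₂ be (possibly oblique) projection matrices, i.e., idempotent matrices, of size n×n, and let G := P₂ P₁. Then ker(G) = ker(P₁) ⊕ (ker(P₂) ∩ im(P₁)), where the sum is direct. -/
open Matrix

lemma toEuclideanLin_mul_apply {n : ℕ} (A B : Matrix (Fin n) (Fin n) ℂ)
    (x : EuclideanSpace ℂ (Fin n)) :
    Matrix.toEuclideanLin (A * B) x = Matrix.toEuclideanLin A (Matrix.toEuclideanLin B x) := by
  simp [Matrix.toEuclideanLin_apply, Matrix.mulVec_mulVec]

/-- For idempotent `P₁, P₂` and `G = P₂ P₁`,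
`ker G = ker P₁ ⊕ (ker P₂ ∩ im P₁)` (internal direct sum). -/
theorem stmt2 {n : ℕ}
    (P₁ P₂ : Matrix (Fin n) (Fin n) ℂ)
    (hP₁ : P₁ * P₁ = P₁) (hP₂ : P₂ * P₂ = P₂)
    (G : Matrix (Fin n) (Fin n) ℂ) (hG : G = P₂ * P₁) :
    Disjoint (LinearMap.ker (Matrix.toEuclideanLin P₁))
      (LinearMap.ker (Matrix.toEuclideanLin P₂) ⊓ LinearMap.range (Matrix.toEuclideanLin P₁)) ∧
    LinearMap.ker (Matrix.toEuclideanLin G) =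
      LinearMap.ker (Matrix.toEuclideanLin P₁) ⊔
        (LinearMap.ker (Matrix.toEuclideanLin P₂) ⊓
          LinearMap.range (Matrix.toEuclideanLin P₁)) := by
  have idem₁ : ∀ x, Matrix.toEuclideanLin P₁ (Matrix.toEuclideanLin P₁ x)
      = Matrix.toEuclideanLin P₁ x := by
    intro x; rw [← toEuclideanLin_mul_apply, hP₁]
  constructor
  · rw [disjoint_iff_inf_le]
    rintro x ⟨hk1, hk2, y, hy⟩
    have : x = Matrix.toEuclideanLin P₁ x := by
      rw [← hy, idem₁]
    simp only [Submodule.mem_bot]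
    rw [this, hk1]
  · ext x
    simp only [LinearMap.mem_ker, Submodule.mem_sup, Submodule.mem_inf,
      LinearMap.mem_ker, LinearMap.mem_range]
    constructor
    · intro hx
      refine ⟨x - Matrix.toEuclideanLin P₁ x, ?_, Matrix.toEuclideanLin P₁ x,
        ⟨?_, ⟨x, rfl⟩⟩, by abel⟩
      · simp [map_sub, idem₁]
      · rw [← toEuclideanLin_mul_apply, ← hG, hx]
    · rintro ⟨y, hy, z, ⟨hz2, w, hw⟩, rfl⟩
      have hz1 : Matrix.toEuclideanLin P₁ z = z := by rw [← hw, idem₁]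
      rw [hG, toEuclideanLin_mul_apply, map_add, hy, hz1]
      simpa using hz2
end

section
/- Let A be an n×m complex matrix, X an n×p matrix, Y an m×q matrix, and define M := A⁺ − A⁺ X (Yᴴ A⁺ X)⁺ Yᴴ A⁺. Then M is a {2}-inverse (outer inverse) of A, i.e., M A M = M. -/
open Matrix

/-- `M = A⁺ − A⁺ X (Yᴴ A⁺ X)⁺ Yᴴ A⁺` is an outer inverse of `A`: `M A M = M`. -/
theorem stmt3 {n m p q : ℕ}
    (A : Matrix (Fin n) (Fin m) ℂ) (X : Matrix (Fin n) (Fin p) ℂ)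
    (Y : Matrix (Fin m) (Fin q) ℂ) (Ap : Matrix (Fin m) (Fin n) ℂ)
    (hAp : IsMPInv A Ap)
    (Fp : Matrix (Fin p) (Fin q) ℂ) (hFp : IsMPInv (Yᴴ * Ap * X) Fp)
    (M : Matrix (Fin m) (Fin n) ℂ) (hM : M = Ap - Ap * X * Fp * Yᴴ * Ap) :
    M * A * M = M := by
  obtain ⟨-, h1, -, -⟩ := hAp
  obtain ⟨-, h2, -, -⟩ := hFp
  subst hM
  set P := Ap * X * Fp * Yᴴ * Ap with hP
  have e1 : Ap * A * P = P := by
    calc Ap * A * P = (Ap * A * Ap) * X * Fp * Yᴴ * Ap := by rw [hP]; simp only [Matrix.mul_assoc]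
    _ = P := by rw [h1, hP]
  have e2 : P * A * Ap = P := by
    calc P * A * Ap = Ap * X * Fp * Yᴴ * (Ap * A * Ap) := by rw [hP]; simp only [Matrix.mul_assoc]
    _ = P := by rw [h1, hP]
  have e3 : P * A * P = P := by
    calc P * A * P = Ap * X * Fp * (Yᴴ * (Ap * A * Ap) * X) * Fp * Yᴴ * Ap := by
          rw [hP]; simp only [Matrix.mul_assoc]
    _ = Ap * X * (Fp * (Yᴴ * Ap * X) * Fp) * Yᴴ * Ap := by rw [h1]; simp only [Matrix.mul_assoc]
    _ = P := by rw [h2, hP]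
  rw [Matrix.sub_mul, Matrix.sub_mul, Matrix.mul_sub, Matrix.mul_sub, h1, e1, e2, e3, sub_self, sub_zero]
end

section
/- Let A, X, Y, and M := A⁺ − A⁺ X (Yᴴ A⁺ X)⁺ Yᴴ A⁺ be as given, with A of size n×m. Then the rank of A plus the dimension of the cokernel of M (i.e., m minus rank(M)) is at least m; equivalently, rank(M) ≤ rank(A). -/
open Matrix

/-- For `M = A⁺ − A⁺ X (Yᴴ A⁺ X)⁺ Yᴴ A⁺`,
`rank A + dim (coker M) ≥ m`, equivalently `rank M ≤ rank A`. -/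
theorem stmt4 {n m p q : ℕ}
    (A : Matrix (Fin n) (Fin m) ℂ) (X : Matrix (Fin n) (Fin p) ℂ)
    (Y : Matrix (Fin m) (Fin q) ℂ) (Ap : Matrix (Fin m) (Fin n) ℂ)
    (hAp : IsMPInv A Ap)
    (Fp : Matrix (Fin p) (Fin q) ℂ) (hFp : IsMPInv (Yᴴ * Ap * X) Fp)
    (M : Matrix (Fin m) (Fin n) ℂ) (hM : M = Ap - Ap * X * Fp * Yᴴ * Ap) :
    A.rank + Module.finrank ℂ
        ((LinearMap.range (Matrix.toEuclideanLin M))ᗮ : Submodule ℂ (EuclideanSpace ℂ (Fin m)))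
      ≥ m ∧ M.rank ≤ A.rank := by
  have hMA : M = Ap * (1 - X * Fp * Yᴴ * Ap) := by
    rw [hM, Matrix.mul_sub, Matrix.mul_one, Matrix.mul_assoc, Matrix.mul_assoc, Matrix.mul_assoc]; simp [Matrix.mul_assoc]
  have hApA : Ap.rank = A.rank := by
    apply le_antisymm
    · calc Ap.rank = (Ap * A * Ap).rank := by rw [hAp.2.1]
      _ ≤ (Ap * A).rank := rank_mul_le_left _ _
      _ ≤ A.rank := rank_mul_le_right _ _
    · calc A.rank = (A * Ap * A).rank := by rw [hAp.1]
      _ ≤ (A * Ap).rank := rank_mul_le_left _ _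
      _ ≤ Ap.rank := rank_mul_le_right _ _
  have hMle : M.rank ≤ A.rank := by
    rw [hMA, ← hApA]; exact rank_mul_le_left _ _
  refine ⟨?_, hMle⟩
  have hrank : M.rank = Module.finrank ℂ (LinearMap.range (Matrix.toEuclideanLin M)) := by
    rw [M.rank_eq_finrank_range_toLin (PiLp.basisFun 2 ℂ (Fin m)) (PiLp.basisFun 2 ℂ (Fin n)),
      ← Matrix.toEuclideanLin_eq_toLin]
  have horth := Submodule.finrank_add_finrank_orthogonal
    (K := LinearMap.range (Matrix.toEuclideanLin M))
  simp only [finrank_euclideanSpace, Fintype.card_fin] at horth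
  have hAm : A.rank ≤ m := A.rank_le_card_width.trans (by simp)
  omega
end

section
/- Let A be an n×m complex matrix, X an n×p matrix, Y an m×q matrix, and M := A⁺ − A⁺ X (Yᴴ A⁺ X)⁺ Yᴴ A⁺. Then M = A⁺ if and only if Yᴴ A⁺ X = 0, equivalently if and only if the subspace (A⁺)ᴴ·im(Y) is orthogonal to im(X). -/
/-! With `G := Yᴴ A⁺ X` and `F := G⁺`, `M = A⁺` means `A⁺ X F Yᴴ A⁺ = 0`. Sandwiching this between
`Yᴴ` and `X` gives `G F G = G = 0`; conversely `G = 0` forces `F = F G F = 0`. For the geometric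
form, `⟪(A⁺)ᴴ Y a, X b⟫ = ⟪a, G b⟫` for all `a, b`, so the two ranges are orthogonal exactly when
`G = 0`. -/

open Matrix
open scoped InnerProductSpace

theorem IsMPInv.eq_zero_iff_eq_zero {m n : Type*} [Fintype m] [Fintype n] {G : Matrix m n ℂ}
    {F : Matrix n m ℂ} (hF : IsMPInv G F) : F = 0 ↔ G = 0 := by
  constructor
  · rintro rfl
    simpa using hF.1.symm
  · rintro rfl
    simpa using hF.2.1.symm

theorem mul_mul_mpInv_mul_mul_eq_zero_iff {m n p q : Type*} [Fintype m] [Fintype n] [Fintype p]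
    [Fintype q] (P : Matrix m n ℂ) (X : Matrix n p ℂ) (B : Matrix q m ℂ)
    {F : Matrix p q ℂ} (hF : IsMPInv (B * P * X) F) :
    P * X * F * B * P = 0 ↔ B * P * X = 0 := by
  constructor
  · intro h
    calc B * P * X = B * P * X * F * (B * P * X) := hF.1.symm
      _ = B * (P * X * F * B * P) * X := by simp only [Matrix.mul_assoc]
      _ = 0 := by rw [h, Matrix.mul_zero, Matrix.zero_mul]
  · intro h
    rw [hF.eq_zero_iff_eq_zero.mpr h, Matrix.mul_zero, Matrix.zero_mul, Matrix.zero_mul]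

theorem Matrix.isOrtho_range_toEuclideanLin_iff {𝕜 n p q : Type*} [RCLike 𝕜] [Fintype n]
    [DecidableEq n] [Fintype p] [DecidableEq p] [Fintype q] [DecidableEq q]
    (B : Matrix n q 𝕜) (X : Matrix n p 𝕜) :
    LinearMap.range B.toEuclideanLin ⟂ LinearMap.range X.toEuclideanLin ↔ Bᴴ * X = 0 := by
  have key : ∀ a b, ⟪B.toEuclideanLin a, X.toEuclideanLin b⟫_𝕜 =
      ⟪a, (Bᴴ * X).toEuclideanLin b⟫_𝕜 := by
    intro a b
    rw [toLpLin_mul, LinearMap.comp_apply, toEuclideanLin_conjTranspose_eq_adjoint,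
      LinearMap.adjoint_inner_right]
  simp only [Submodule.isOrtho_iff_inner_eq, LinearMap.mem_range, forall_exists_index,
    forall_apply_eq_imp_iff, key]
  rw [← (toEuclideanLin (𝕜 := 𝕜)).map_eq_zero_iff, LinearMap.ext_iff, forall_comm]
  exact forall_congr' fun b =>
    ⟨fun h => ext_inner_left 𝕜 fun a => by rw [h, LinearMap.zero_apply, inner_zero_right],
      fun h a => by rw [h, LinearMap.zero_apply, inner_zero_right]⟩

theorem stmt5_general {n m p q : ℕ}
    (X : Matrix (Fin n) (Fin p) ℂ)
    (Y : Matrix (Fin m) (Fin q) ℂ) (Ap : Matrix (Fin m) (Fin n) ℂ)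
    (Fp : Matrix (Fin p) (Fin q) ℂ) (hFp : IsMPInv (Yᴴ * Ap * X) Fp)
    (M : Matrix (Fin m) (Fin n) ℂ) (hM : M = Ap - Ap * X * Fp * Yᴴ * Ap) :
    (M = Ap ↔ Yᴴ * Ap * X = 0) ∧
    (M = Ap ↔ ∀ u ∈ Submodule.map (Matrix.toEuclideanLin Apᴴ)
          (LinearMap.range (Matrix.toEuclideanLin Y)),
        ∀ v ∈ LinearMap.range (Matrix.toEuclideanLin X), ⟪u, v⟫_ℂ = 0) := by
  have hM_iff : M = Ap ↔ Yᴴ * Ap * X = 0 := by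
    rw [hM, sub_eq_self]
    exact mul_mul_mpInv_mul_mul_eq_zero_iff Ap X Yᴴ hFp
  refine ⟨hM_iff, hM_iff.trans ?_⟩
  rw [← LinearMap.range_comp, ← toLpLin_mul, ← Submodule.isOrtho_iff_inner_eq,
    isOrtho_range_toEuclideanLin_iff, conjTranspose_mul, conjTranspose_conjTranspose]

/-- `M = A⁺` iff `Yᴴ A⁺ X = 0`, iff `(A⁺)ᴴ·im(Y) ⟂ im(X)`. -/
theorem stmt5 {n m p q : ℕ}
    (A : Matrix (Fin n) (Fin m) ℂ) (X : Matrix (Fin n) (Fin p) ℂ)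
    (Y : Matrix (Fin m) (Fin q) ℂ) (Ap : Matrix (Fin m) (Fin n) ℂ)
    (hAp : IsMPInv A Ap)
    (Fp : Matrix (Fin p) (Fin q) ℂ) (hFp : IsMPInv (Yᴴ * Ap * X) Fp)
    (M : Matrix (Fin m) (Fin n) ℂ) (hM : M = Ap - Ap * X * Fp * Yᴴ * Ap) :
    (M = Ap ↔ Yᴴ * Ap * X = 0) ∧
    (M = Ap ↔ ∀ u ∈ Submodule.map (Matrix.toEuclideanLin Apᴴ)
          (LinearMap.range (Matrix.toEuclideanLin Y)),
        ∀ v ∈ LinearMap.range (Matrix.toEuclideanLin X), ⟪u, v⟫_ℂ = 0) :=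
  stmt5_general X Y Ap Fp hFp M hM
end

section
/- Let A be an n×n Hermitian complex matrix whose Moore–Penrose inverse A⁺ is positive-definite on the subspace 𝒳 := im(X) for some n×p matrix X (i.e., xᴴ A⁺ x > 0 for all nonzero x ∈ 𝒳). Then A⁺𝒳 ⊕ 𝒳^⊥ = ℂⁿ, i.e., the image of 𝒳 under A⁺ and the orthogonal complement of 𝒳 are complementary subspaces. -/
open Matrix

/-!
If `x ↦ ⟪x, T x⟫` vanishes on `V` only at `0`, then `T` is injective on `V` (so `dim T V = dim V`)
and `T V` meets `Vᗮ` trivially, since `T x ∈ Vᗮ` forces `⟪x, T x⟫ = 0` for `x ∈ V`.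
As `dim V + dim Vᗮ` is the whole dimension, `T V` and `Vᗮ` are complementary.
-/

section InnerProductSpace

variable {𝕜 E : Type*} [RCLike 𝕜] [NormedAddCommGroup E] [InnerProductSpace 𝕜 E]
  {T : E →ₗ[𝕜] E} {V : Submodule 𝕜 E}

theorem Submodule.disjoint_map_orthogonal_of_inner_self_map_eq_zero
    (hT : ∀ x ∈ V, inner 𝕜 x (T x) = 0 → x = 0) : Disjoint (V.map T) Vᗮ := by
  rw [Submodule.disjoint_def]
  rintro _ ⟨x, hx, rfl⟩ hTx
  rw [hT x hx (hTx x hx), map_zero]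

theorem Submodule.finrank_map_of_inner_self_map_eq_zero
    (hT : ∀ x ∈ V, inner 𝕜 x (T x) = 0 → x = 0) :
    Module.finrank 𝕜 (V.map T) = Module.finrank 𝕜 V := by
  have hinj : Function.Injective (T ∘ₗ V.subtype) := by
    rw [← LinearMap.ker_eq_bot, LinearMap.ker_eq_bot']
    rintro ⟨x, hx⟩ hTx
    exact Subtype.ext <| hT x hx <| by simp [show T x = 0 from hTx]
  rw [← LinearMap.finrank_range_of_inj hinj, LinearMap.range_comp, Submodule.range_subtype]

theorem Submodule.isCompl_map_orthogonal_of_inner_self_map_eq_zero [FiniteDimensional 𝕜 E]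
    (hT : ∀ x ∈ V, inner 𝕜 x (T x) = 0 → x = 0) : IsCompl (V.map T) Vᗮ := by
  refine (Submodule.isCompl_iff_disjoint _ _ ?_).mpr
    (disjoint_map_orthogonal_of_inner_self_map_eq_zero hT)
  rw [finrank_map_of_inner_self_map_eq_zero hT, Submodule.finrank_add_finrank_orthogonal]

end InnerProductSpace

theorem Matrix.inner_toEuclideanLin_self {n : Type*} [Fintype n] [DecidableEq n] (M : Matrix n n ℂ)
    (x : EuclideanSpace ℂ n) :
    inner ℂ x (M.toEuclideanLin x) = star (x : n → ℂ) ⬝ᵥ M *ᵥ x :=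
  dotProduct_comm _ _

theorem stmt6_general {n p : ℕ}
    (Ap : Matrix (Fin n) (Fin n) ℂ)
    (X : Matrix (Fin n) (Fin p) ℂ)
    (hPD : ∀ x ∈ LinearMap.range (Matrix.toEuclideanLin X), x ≠ 0 →
      0 < RCLike.re (dotProduct (star (x : Fin n → ℂ)) (Ap.mulVec x))) :
    Disjoint (Submodule.map (Matrix.toEuclideanLin Ap)
        (LinearMap.range (Matrix.toEuclideanLin X)))
      ((LinearMap.range (Matrix.toEuclideanLin X))ᗮ) ∧
    Submodule.map (Matrix.toEuclideanLin Ap)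
        (LinearMap.range (Matrix.toEuclideanLin X)) ⊔
      (LinearMap.range (Matrix.toEuclideanLin X))ᗮ = ⊤ := by
  have hcompl := Submodule.isCompl_map_orthogonal_of_inner_self_map_eq_zero
    (T := Matrix.toEuclideanLin Ap) (V := LinearMap.range (Matrix.toEuclideanLin X))
    fun x hx hzero ↦ by
      by_contra hne
      have hpos := hPD x hx hne
      rw [← Matrix.inner_toEuclideanLin_self, hzero, map_zero] at hpos
      exact hpos.false
  exact ⟨hcompl.disjoint, codisjoint_iff.mp hcompl.codisjoint⟩

/-- If `A` is Hermitian and `A⁺` is positive-definite on `𝒳 = im X`,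
then `A⁺𝒳 ⊕ 𝒳ᗮ = ℂⁿ`. -/
theorem stmt6 {n p : ℕ}
    (A : Matrix (Fin n) (Fin n) ℂ) (hA : Aᴴ = A)
    (Ap : Matrix (Fin n) (Fin n) ℂ) (hAp : IsMPInv A Ap)
    (X : Matrix (Fin n) (Fin p) ℂ)
    (hPD : ∀ x ∈ LinearMap.range (Matrix.toEuclideanLin X), x ≠ 0 →
      0 < RCLike.re (dotProduct (star (x : Fin n → ℂ)) (Ap.mulVec x))) :
    Disjoint (Submodule.map (Matrix.toEuclideanLin Ap)
        (LinearMap.range (Matrix.toEuclideanLin X)))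
      ((LinearMap.range (Matrix.toEuclideanLin X))ᗮ) ∧
    Submodule.map (Matrix.toEuclideanLin Ap)
        (LinearMap.range (Matrix.toEuclideanLin X)) ⊔
      (LinearMap.range (Matrix.toEuclideanLin X))ᗮ = ⊤ :=
  stmt6_general Ap X hPD
end

section
/- Let M be an m×n complex matrix such that M A M = M for some n×m matrix A (i.e., M is an outer inverse of A). Let 𝒳̂ := ker(M) and 𝒴̂^⊥ := im(M), and let P₁ and P₂ be the orthogonal projections onto 𝒳̂^⊥ and 𝒴̂^⊥ respectively. Then the Moore–Penrose inverse of M is M⁺ = P₁ A P₂. -/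
/-!
Since `M A M = M`, the matrix `M A` is idempotent with the same range as `M`, and dually
`(A M)ᴴ = Mᴴ Aᴴ` is idempotent with range `(ker M)ᗮ`. An idempotent fixes every vector of its
range, which gives `P₂ M = M`, `M A P₂ = P₂`, `M P₁ = M` and `P₁ A M = P₁`. Hence
`Z = P₁ A P₂` satisfies `M Z = P₂` and `Z M = P₁`, two orthogonal projections, and the Penrose
equations follow.
-/

open Matrix

namespace Matrix

variable {𝕜 : Type*} [RCLike 𝕜] {l m n : Type*}
  [Fintype l] [DecidableEq l] [Fintype m] [DecidableEq m] [Fintype n] [DecidableEq n]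

theorem range_toEuclideanLin_conjTranspose (M : Matrix m n 𝕜) :
    LinearMap.range (toEuclideanLin Mᴴ) = (LinearMap.ker (toEuclideanLin M))ᗮ := by
  rw [toEuclideanLin_conjTranspose_eq_adjoint, LinearMap.orthogonal_ker]

theorem mul_eq_right_of_range_le {P : Matrix m m 𝕜} (hP : IsIdempotentElem P)
    {B : Matrix m n 𝕜}
    (h : LinearMap.range (toEuclideanLin B) ≤ LinearMap.range (toEuclideanLin P)) :
    P * B = B :=
  toEuclideanLin.injective <| by
    rw [toLpLin_mul_same]
    exact (LinearMap.IsIdempotentElem.comp_eq_right_iff (hP.map (toLpLinAlgEquiv 2)) _).mpr h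

theorem mul_mul_eq_right_of_range_le {M : Matrix m n 𝕜} {A : Matrix n m 𝕜}
    (hMA : M * A * M = M) {P : Matrix m l 𝕜}
    (hP : LinearMap.range (toEuclideanLin P) ≤ LinearMap.range (toEuclideanLin M)) :
    M * A * P = P := by
  have hidem : IsIdempotentElem (M * A) := by
    rw [IsIdempotentElem, ← Matrix.mul_assoc, hMA]
  refine mul_eq_right_of_range_le hidem (hP.trans ?_)
  conv_lhs => rw [← hMA, toLpLin_mul_same]
  exact LinearMap.range_comp_le_range _ _

theorem mul_eq_left_of_orthogonal_ker_le {M : Matrix m n 𝕜} {P : Matrix n n 𝕜}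
    (hP : IsStarProjection P)
    (h : (LinearMap.ker (toEuclideanLin M))ᗮ ≤ LinearMap.range (toEuclideanLin P)) :
    M * P = M := by
  refine conjTranspose_injective ?_
  rw [conjTranspose_mul, hP.isSelfAdjoint.isHermitian.eq]
  exact mul_eq_right_of_range_le hP.isIdempotentElem
    ((range_toEuclideanLin_conjTranspose M).trans_le h)

theorem mul_mul_eq_left_of_range_le_orthogonal_ker {M : Matrix m n 𝕜} {A : Matrix n m 𝕜}
    (hMA : M * A * M = M) {P : Matrix n n 𝕜} (hP : IsSelfAdjoint P)
    (h : LinearMap.range (toEuclideanLin P) ≤ (LinearMap.ker (toEuclideanLin M))ᗮ) :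
    P * A * M = P := by
  refine conjTranspose_injective ?_
  have hMA' : Mᴴ * Aᴴ * Mᴴ = Mᴴ := by
    simpa only [conjTranspose_mul, Matrix.mul_assoc] using congrArg conjTranspose hMA
  rw [conjTranspose_mul, conjTranspose_mul, hP.isHermitian.eq, ← Matrix.mul_assoc]
  exact mul_mul_eq_right_of_range_le hMA' (h.trans_eq (range_toEuclideanLin_conjTranspose M).symm)

end Matrix

/-- If `M A M = M`, and `P₁`, `P₂` are the orthogonal projections onto
`(ker M)ᗮ` and `im M` respectively, then `M⁺ = P₁ A P₂`. -/
theorem stmt8 {m n : ℕ}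
    (M : Matrix (Fin m) (Fin n) ℂ) (A : Matrix (Fin n) (Fin m) ℂ)
    (hMA : M * A * M = M)
    (P₁ : Matrix (Fin n) (Fin n) ℂ)
    (hP₁ : P₁ * P₁ = P₁ ∧ P₁ᴴ = P₁ ∧
      LinearMap.range (Matrix.toEuclideanLin P₁) =
        (LinearMap.ker (Matrix.toEuclideanLin M))ᗮ)
    (P₂ : Matrix (Fin m) (Fin m) ℂ)
    (hP₂ : P₂ * P₂ = P₂ ∧ P₂ᴴ = P₂ ∧
      LinearMap.range (Matrix.toEuclideanLin P₂) =
        LinearMap.range (Matrix.toEuclideanLin M)) :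
    IsMPInv M (P₁ * A * P₂) := by
  obtain ⟨hP₁idem, hP₁herm, hP₁range⟩ := hP₁
  obtain ⟨hP₂idem, hP₂herm, hP₂range⟩ := hP₂
  have hP₂M : P₂ * M = M := mul_eq_right_of_range_le hP₂idem hP₂range.ge
  have hMZ : M * (P₁ * A * P₂) = P₂ := by
    rw [← Matrix.mul_assoc, ← Matrix.mul_assoc,
      mul_eq_left_of_orthogonal_ker_le ⟨hP₁idem, hP₁herm⟩ hP₁range.ge,
      mul_mul_eq_right_of_range_le hMA hP₂range.le]
  have hZM : P₁ * A * P₂ * M = P₁ := by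
    rw [Matrix.mul_assoc _ P₂, hP₂M,
      mul_mul_eq_left_of_range_le_orthogonal_ker hMA hP₁herm hP₁range.le]
  refine ⟨by rw [hMZ, hP₂M], ?_, by rw [hMZ, hP₂herm], by rw [hZM, hP₁herm]⟩
  rw [hZM, ← Matrix.mul_assoc, ← Matrix.mul_assoc, hP₁idem]
end

section
/- Let A be an n×n complex matrix and M := A⁻¹ − A⁻¹ X (Yᴴ A⁻¹ X)⁺ Yᴴ A⁻¹ where A is invertible and X, Y are n×p, n×q matrices. Suppose ind(M) = 1 (so ℂⁿ = im(M) ⊕ ker(M)). Let 𝒳̂ := ker(M), 𝒴̂^⊥ := im(M), let P be the oblique projector onto 𝒴̂^⊥ along 𝒳̂, and define N := (I − P) + A P. Then N is invertible and M = P N⁻¹. -/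
open Matrix

/-- For invertible `A` and `M = A⁻¹ − A⁻¹ X (Yᴴ A⁻¹ X)⁺ Yᴴ A⁻¹` with
`ind M = 1`, if `P` is the oblique projector onto `im M` along `ker M` and
`N = (I − P) + A P`, then `N` is invertible and `M = P N⁻¹`. -/
theorem stmt10 {n p q : ℕ}
    (A : Matrix (Fin n) (Fin n) ℂ) (hA : IsUnit A.det)
    (X : Matrix (Fin n) (Fin p) ℂ) (Y : Matrix (Fin n) (Fin q) ℂ)
    (Fp : Matrix (Fin p) (Fin q) ℂ) (hFp : IsMPInv (Yᴴ * A⁻¹ * X) Fp)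
    (M : Matrix (Fin n) (Fin n) ℂ) (hM : M = A⁻¹ - A⁻¹ * X * Fp * Yᴴ * A⁻¹)
    (hind : (M * M).rank = M.rank)
    (P : Matrix (Fin n) (Fin n) ℂ)
    (hP : P * P = P ∧
      LinearMap.range (Matrix.toEuclideanLin P) =
        LinearMap.range (Matrix.toEuclideanLin M) ∧
      LinearMap.ker (Matrix.toEuclideanLin P) =
        LinearMap.ker (Matrix.toEuclideanLin M))
    (N : Matrix (Fin n) (Fin n) ℂ) (hN : N = (1 - P) + A * P) :
    IsUnit N.det ∧ M = P * N⁻¹ := by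
  obtain ⟨hPP, hrange, hker⟩ := hP
  have hinv : A⁻¹ * A = 1 := A.nonsing_inv_mul hA
  have hinv' : A * A⁻¹ = 1 := A.mul_nonsing_inv hA
  have hc : ∀ B : Matrix (Fin n) (Fin n) ℂ, A * (A⁻¹ * B) = B := fun B => by
    rw [← Matrix.mul_assoc, hinv', Matrix.one_mul]
  -- key identity M A M = M
  have hF := hFp.2.1
  have hMAM : M * A * M = M := by
    subst hM
    have e1 : (A⁻¹ - A⁻¹ * X * Fp * Yᴴ * A⁻¹) * A = 1 - A⁻¹ * X * Fp * Yᴴ := by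
      rw [Matrix.sub_mul, Matrix.mul_assoc (A⁻¹ * X * Fp * Yᴴ) A⁻¹ A, hinv,
        Matrix.mul_one]
    rw [e1, Matrix.sub_mul, Matrix.one_mul, Matrix.mul_sub]
    have e2 : A⁻¹ * X * Fp * Yᴴ * (A⁻¹ * X * Fp * Yᴴ * A⁻¹)
        = A⁻¹ * X * Fp * Yᴴ * A⁻¹ := by
      have : A⁻¹ * X * (Fp * (Yᴴ * A⁻¹ * X) * Fp) * (Yᴴ * A⁻¹)
          = A⁻¹ * X * Fp * (Yᴴ * A⁻¹) := by rw [hF]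
      calc A⁻¹ * X * Fp * Yᴴ * (A⁻¹ * X * Fp * Yᴴ * A⁻¹)
          = A⁻¹ * X * (Fp * (Yᴴ * A⁻¹ * X) * Fp) * (Yᴴ * A⁻¹) := by
            simp only [Matrix.mul_assoc]
        _ = A⁻¹ * X * Fp * (Yᴴ * A⁻¹) := this
        _ = A⁻¹ * X * Fp * Yᴴ * A⁻¹ := by simp only [Matrix.mul_assoc]
    rw [e2]
    abel
  -- translate range/ker statements to mulVec
  have hkerMV : ∀ v : Fin n → ℂ, P *ᵥ v = 0 → M *ᵥ v = 0 := by
    intro v hv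
    have : (WithLp.equiv 2 (Fin n → ℂ)).symm v ∈ LinearMap.ker (Matrix.toEuclideanLin P) := by
      simp [LinearMap.mem_ker, Matrix.toEuclideanLin_apply, hv]
    rw [hker] at this
    simpa [LinearMap.mem_ker, Matrix.toEuclideanLin_apply] using this
  have hrangeMV : ∀ v : Fin n → ℂ, ∃ w : Fin n → ℂ, M *ᵥ w = P *ᵥ v := by
    intro v
    have : (Matrix.toEuclideanLin P) ((WithLp.equiv 2 (Fin n → ℂ)).symm v) ∈
        LinearMap.range (Matrix.toEuclideanLin M) := by
      rw [← hrange]; exact LinearMap.mem_range_self _ _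
    obtain ⟨w, hw⟩ := this
    refine ⟨WithLp.equiv 2 (Fin n → ℂ) w, ?_⟩
    have := congrArg (WithLp.equiv 2 (Fin n → ℂ)) hw
    simpa [Matrix.toEuclideanLin_apply] using this
  -- M * (1 - P) = 0
  have hM1P : M * (1 - P) = 0 := by
    apply Matrix.toLin'.injective
    apply LinearMap.ext
    intro v
    have h0 : P *ᵥ ((1 - P) *ᵥ v) = 0 := by
      have hz : P * (1 - P) = 0 := by simp [Matrix.mul_sub, hPP]
      rw [Matrix.mulVec_mulVec, hz, Matrix.zero_mulVec]
    have := hkerMV _ h0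
    simp only [Matrix.toLin'_apply, Matrix.mulVec_mulVec] at *
    rw [← Matrix.mulVec_mulVec] at *
    simp [this]
  -- M * A * P = P
  have hMAP : M * A * P = P := by
    apply Matrix.toLin'.injective
    apply LinearMap.ext
    intro v
    obtain ⟨w, hw⟩ := hrangeMV v
    simp only [Matrix.toLin'_apply, LinearMap.zero_apply]
    calc (M * A * P) *ᵥ v = (M * A) *ᵥ (P *ᵥ v) := by rw [Matrix.mulVec_mulVec]
      _ = (M * A) *ᵥ (M *ᵥ w) := by rw [hw]
      _ = (M * A * M) *ᵥ w := by rw [Matrix.mulVec_mulVec]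
      _ = M *ᵥ w := by rw [hMAM]
      _ = P *ᵥ v := hw
  -- M * N = P
  have hMN : M * N = P := by
    rw [hN, Matrix.mul_add, hM1P, ← Matrix.mul_assoc, hMAP, zero_add]
  -- N injective
  have hNinj : Function.Injective (N.mulVec) := by
    have : ∀ v : Fin n → ℂ, N *ᵥ v = 0 → v = 0 := by
      intro v hv
      have hPv : P *ᵥ v = 0 := by
        have : (M * N) *ᵥ v = 0 := by rw [← Matrix.mulVec_mulVec, hv, Matrix.mulVec_zero]
        rwa [hMN] at this
      have : N *ᵥ v = v := by
        rw [hN, Matrix.add_mulVec, Matrix.sub_mulVec, ← Matrix.mulVec_mulVec]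
        simp [hPv]
      rw [this] at hv; exact hv
    intro a b hab
    have := this (a - b) (by rw [Matrix.mulVec_sub, hab, sub_self])
    exact sub_eq_zero.mp this
  have hNdet : IsUnit N.det := by
    have := Matrix.mulVec_injective_iff_isUnit.mp hNinj
    exact (Matrix.isUnit_iff_isUnit_det N).mp this
  refine ⟨hNdet, ?_⟩
  calc M = M * (N * N⁻¹) := by rw [Matrix.mul_nonsing_inv N hNdet, Matrix.mul_one]
    _ = (M * N) * N⁻¹ := by rw [Matrix.mul_assoc]
    _ = P * N⁻¹ := by rw [hMN]
end

section
/- Let A be an n×n complex matrix, M an outer inverse of A (M A M = M) with ind(M) = 1, and let N := (I − P) + A P where P is the oblique projector onto im(M) along ker(M), with N invertible and M = P N⁻¹. Let U be an n×r matrix whose columns form an orthonormal basis of ker(M)^⊥, where r = rank(M). Then the r×r matrices Uᴴ N U and Uᴴ M U are both invertible and (Uᴴ M U) = (Uᴴ N U)⁻¹. -/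
/-!
Since `1 - U Uᴴ` maps into `(range U)ᗮ = ker M`, we have `M U Uᴴ = M`; since `1 - P` maps
into `ker P = ker M = (range U)ᗮ = ker Uᴴ`, we have `Uᴴ P = Uᴴ`. With `M N = P` this gives
`(Uᴴ M U)(Uᴴ N U) = Uᴴ M N U = Uᴴ P U = Uᴴ U = 1`.
-/

open Matrix

namespace Matrix

variable {𝕜 : Type*} [RCLike 𝕜] {l m n : Type*} [Fintype m] [DecidableEq m]
  [Fintype n] [DecidableEq n]

theorem mul_eq_zero_iff_range_le_ker (A : Matrix l m 𝕜) (B : Matrix m n 𝕜) :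
    A * B = 0 ↔
      LinearMap.range (toEuclideanLin B) ≤ LinearMap.ker (toEuclideanLin A) := by
  rw [LinearMap.range_le_ker_iff, ← toLpLin_mul, LinearEquiv.map_eq_zero_iff]

theorem ker_toEuclideanLin_conjTranspose (A : Matrix m n 𝕜) :
    LinearMap.ker (toEuclideanLin Aᴴ) = (LinearMap.range (toEuclideanLin A))ᗮ := by
  rw [toEuclideanLin_conjTranspose_eq_adjoint, LinearMap.orthogonal_range]

theorem conjTranspose_mul_eq_zero_iff [Fintype l] [DecidableEq l] (U : Matrix m n 𝕜) (B : Matrix m l 𝕜) :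
    Uᴴ * B = 0 ↔
      LinearMap.range (toEuclideanLin B) ≤ (LinearMap.range (toEuclideanLin U))ᗮ := by
  rw [mul_eq_zero_iff_range_le_ker, ker_toEuclideanLin_conjTranspose]

theorem mul_mul_conjTranspose_eq_self {M : Matrix l m 𝕜} {U : Matrix m n 𝕜}
    (hU : Uᴴ * U = 1)
    (hker : (LinearMap.range (toEuclideanLin U))ᗮ ≤ LinearMap.ker (toEuclideanLin M)) :
    M * (U * Uᴴ) = M := by
  have hUc : Uᴴ * (1 - U * Uᴴ) = 0 := by
    rw [Matrix.mul_sub, Matrix.mul_one, ← Matrix.mul_assoc, hU, Matrix.one_mul, sub_self]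
  have hMc : M * (1 - U * Uᴴ) = 0 :=
    (mul_eq_zero_iff_range_le_ker _ _).2
      (((conjTranspose_mul_eq_zero_iff _ _).1 hUc).trans hker)
  rwa [Matrix.mul_sub, Matrix.mul_one, sub_eq_zero, eq_comm] at hMc

theorem conjTranspose_mul_eq_self_of_ker_le {P : Matrix m m 𝕜} {U : Matrix m n 𝕜}
    (hP : IsIdempotentElem P)
    (hker : LinearMap.ker (toEuclideanLin P) ≤ (LinearMap.range (toEuclideanLin U))ᗮ) :
    Uᴴ * P = Uᴴ := by
  have hPc : P * (1 - P) = 0 := by rw [Matrix.mul_sub, Matrix.mul_one, hP.eq, sub_self]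
  have hUc : Uᴴ * (1 - P) = 0 :=
    (conjTranspose_mul_eq_zero_iff _ _).2
      (((mul_eq_zero_iff_range_le_ker _ _).1 hPc).trans hker)
  rwa [Matrix.mul_sub, Matrix.mul_one, sub_eq_zero, eq_comm] at hUc

theorem compression_mul_compression_eq_one {M N P : Matrix m m 𝕜} {U : Matrix m n 𝕜}
    (hMN : M * N = P) (hP : IsIdempotentElem P)
    (hkerP : LinearMap.ker (toEuclideanLin P) = LinearMap.ker (toEuclideanLin M))
    (hU : Uᴴ * U = 1)
    (hUrange : LinearMap.range (toEuclideanLin U) = (LinearMap.ker (toEuclideanLin M))ᗮ) :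
    (Uᴴ * M * U) * (Uᴴ * N * U) = 1 := by
  have hkerM : LinearMap.ker (toEuclideanLin M) = (LinearMap.range (toEuclideanLin U))ᗮ := by
    rw [hUrange, Submodule.orthogonal_orthogonal]
  calc (Uᴴ * M * U) * (Uᴴ * N * U) = Uᴴ * (M * (U * Uᴴ)) * N * U := by
        simp only [Matrix.mul_assoc]
    _ = Uᴴ * (M * N) * U := by
        rw [mul_mul_conjTranspose_eq_self hU hkerM.ge]
        simp only [Matrix.mul_assoc]
    _ = 1 := by rw [hMN, conjTranspose_mul_eq_self_of_ker_le hP (hkerP.trans hkerM).le, hU]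

end Matrix

theorem stmt12_general {n r : ℕ}
    (M : Matrix (Fin n) (Fin n) ℂ)
    (P : Matrix (Fin n) (Fin n) ℂ)
    (hP : P * P = P ∧
      LinearMap.range (Matrix.toEuclideanLin P) =
        LinearMap.range (Matrix.toEuclideanLin M) ∧
      LinearMap.ker (Matrix.toEuclideanLin P) =
        LinearMap.ker (Matrix.toEuclideanLin M))
    (N : Matrix (Fin n) (Fin n) ℂ)
    (hNinv : IsUnit N.det) (hMN : M = P * N⁻¹)
    (U : Matrix (Fin n) (Fin r) ℂ) (hU : Uᴴ * U = 1)
    (hUrange : LinearMap.range (Matrix.toEuclideanLin U) =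
      (LinearMap.ker (Matrix.toEuclideanLin M))ᗮ) :
    IsUnit (Uᴴ * N * U).det ∧ IsUnit (Uᴴ * M * U).det ∧
      Uᴴ * M * U = (Uᴴ * N * U)⁻¹ := by
  obtain ⟨hPP, -, hkerP⟩ := hP
  have hMNP : M * N = P := by rw [hMN, Matrix.mul_assoc, nonsing_inv_mul N hNinv, mul_one]
  have h := compression_mul_compression_eq_one hMNP hPP hkerP hU hUrange
  exact ⟨isUnit_det_of_left_inverse h, isUnit_det_of_right_inverse h, (inv_eq_left_inv h).symm⟩

/-- For an outer inverse `M` of `A` with `ind M = 1`, `N = (I − P) + A P`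
invertible with `M = P N⁻¹`, and `U` an orthonormal basis matrix of `(ker M)ᗮ`
(`r = rank M`), the compressions `Uᴴ N U` and `Uᴴ M U` are invertible and
`Uᴴ M U = (Uᴴ N U)⁻¹`. -/
theorem stmt12 {n r : ℕ}
    (A M : Matrix (Fin n) (Fin n) ℂ) (hMAM : M * A * M = M)
    (hind : (M * M).rank = M.rank)
    (P : Matrix (Fin n) (Fin n) ℂ)
    (hP : P * P = P ∧
      LinearMap.range (Matrix.toEuclideanLin P) =
        LinearMap.range (Matrix.toEuclideanLin M) ∧
      LinearMap.ker (Matrix.toEuclideanLin P) =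
        LinearMap.ker (Matrix.toEuclideanLin M))
    (N : Matrix (Fin n) (Fin n) ℂ) (hN : N = (1 - P) + A * P)
    (hNinv : IsUnit N.det) (hMN : M = P * N⁻¹)
    (hr : r = M.rank)
    (U : Matrix (Fin n) (Fin r) ℂ) (hU : Uᴴ * U = 1)
    (hUrange : LinearMap.range (Matrix.toEuclideanLin U) =
      (LinearMap.ker (Matrix.toEuclideanLin M))ᗮ) :
    IsUnit (Uᴴ * N * U).det ∧ IsUnit (Uᴴ * M * U).det ∧
      Uᴴ * M * U = (Uᴴ * N * U)⁻¹ :=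
  stmt12_general M P hP N hNinv hMN U hU hUrange
end

section
/- Let P̂ be the oblique projector onto a subspace R along a complementary subspace N' of ℂⁿ (R ⊕ N' = ℂⁿ), and suppose X̂ and Ŷ are matrices with im(X̂) = N' and im(Ŷ)^⊥ = R. Then P̂ = I − X̂ (Ŷᴴ X̂)⁺ Ŷᴴ. -/
open Matrix

lemma aux_mul {n m k : ℕ} (A : Matrix (Fin n) (Fin m) ℂ) (B : Matrix (Fin m) (Fin k) ℂ) :
    Matrix.toEuclideanLin (A*B) = (Matrix.toEuclideanLin A) ∘ₗ (Matrix.toEuclideanLin B) := by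
  ext v
  simp [Matrix.toEuclideanLin_apply, Matrix.mulVec_mulVec]

lemma aux_mul' {n m k : ℕ} (A : Matrix (Fin n) (Fin m) ℂ) (B : Matrix (Fin m) (Fin k) ℂ)
    (v : EuclideanSpace ℂ (Fin k)) :
    Matrix.toEuclideanLin (A*B) v = Matrix.toEuclideanLin A (Matrix.toEuclideanLin B v) := by
  rw [aux_mul]; rfl

lemma aux_inj {n m : ℕ} (A B : Matrix (Fin n) (Fin m) ℂ)
    (h : ∀ v, Matrix.toEuclideanLin A v = Matrix.toEuclideanLin B v) : A = B :=
  Matrix.toEuclideanLin.injective (LinearMap.ext h)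

lemma aux_ker {n m : ℕ} (A : Matrix (Fin n) (Fin m) ℂ) (u : EuclideanSpace ℂ (Fin n)) :
    Matrix.toEuclideanLin Aᴴ u = 0 ↔ u ∈ (LinearMap.range (Matrix.toEuclideanLin A))ᗮ := by
  rw [Matrix.toEuclideanLin_conjTranspose_eq_adjoint]
  constructor
  · intro h x hx
    obtain ⟨y, rfl⟩ := hx
    rw [← LinearMap.adjoint_inner_right, h, inner_zero_right]
  · intro h
    apply ext_inner_left ℂ
    intro y
    rw [LinearMap.adjoint_inner_right, inner_zero_right]
    exact (h _ ⟨y, rfl⟩)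

/-- If `P` is the oblique projector onto `R` along `N'` (with
`R ⊕ N' = ℂⁿ`), `im X̂ = N'` and `(im Ŷ)ᗮ = R`, then `P = I − X̂ (Ŷᴴ X̂)⁺ Ŷᴴ`. -/
theorem stmt13 {n p q : ℕ}
    (R N' : Submodule ℂ (EuclideanSpace ℂ (Fin n)))
    (hcompl : Disjoint R N' ∧ R ⊔ N' = ⊤)
    (P : Matrix (Fin n) (Fin n) ℂ)
    (hP : P * P = P ∧ LinearMap.range (Matrix.toEuclideanLin P) = R ∧
      LinearMap.ker (Matrix.toEuclideanLin P) = N')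
    (Xh : Matrix (Fin n) (Fin p) ℂ) (hXh : LinearMap.range (Matrix.toEuclideanLin Xh) = N')
    (Yh : Matrix (Fin n) (Fin q) ℂ) (hYh : (LinearMap.range (Matrix.toEuclideanLin Yh))ᗮ = R)
    (W : Matrix (Fin p) (Fin q) ℂ) (hW : IsMPInv (Yhᴴ * Xh) W) :
    P = 1 - Xh * W * Yhᴴ := by
  obtain ⟨hdisj, hsup⟩ := hcompl
  obtain ⟨hPP, hPr, hPk⟩ := hP
  obtain ⟨h1, h2, h3, h4⟩ := hW
  -- key identity : Xh * (W * (Yhᴴ * Xh)) = Xh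
  set D : Matrix (Fin n) (Fin p) ℂ := Xh - Xh * (W * (Yhᴴ * Xh)) with hD
  have hYD : Yhᴴ * D = 0 := by
    have : Yhᴴ * (Xh * (W * (Yhᴴ * Xh))) = Yhᴴ * Xh * W * (Yhᴴ * Xh) := by
      simp only [Matrix.mul_assoc]
    rw [hD, Matrix.mul_sub, this, h1, sub_self]
  have hDfac : D = Xh * (1 - W * (Yhᴴ * Xh)) := by
    rw [Matrix.mul_sub, Matrix.mul_one]
  have hD0 : D = 0 := by
    apply aux_inj
    intro v
    set u := Matrix.toEuclideanLin D v with hu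
    have huN : u ∈ N' := by
      rw [← hXh]
      rw [hu, hDfac, aux_mul]
      exact ⟨_, rfl⟩
    have huR : u ∈ R := by
      rw [← hYh, ← aux_ker]
      have : Matrix.toEuclideanLin Yhᴴ u = Matrix.toEuclideanLin (Yhᴴ * D) v := by
        rw [aux_mul]; rfl
      rw [this, hYD]
      simp
    have : u = 0 := Submodule.disjoint_def.mp hdisj u huR huN
    simpa using this
  have hXWA : Xh * (W * (Yhᴴ * Xh)) = Xh := by
    rw [hD, sub_eq_zero] at hD0
    exact hD0.symm
  -- main proof
  apply aux_inj
  intro v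
  have hv : v ∈ R ⊔ N' := hsup ▸ Submodule.mem_top
  obtain ⟨r, hr, x, hx, rfl⟩ := Submodule.mem_sup.mp hv
  have hPr' : Matrix.toEuclideanLin P r = r := by
    rw [← hPr] at hr
    obtain ⟨y, rfl⟩ := hr
    have : Matrix.toEuclideanLin P (Matrix.toEuclideanLin P y)
        = Matrix.toEuclideanLin (P * P) y := by rw [aux_mul]; rfl
    rw [this, hPP]
  have hPx : Matrix.toEuclideanLin P x = 0 := by
    rw [← hPk] at hx
    exact hx
  have hYr : Matrix.toEuclideanLin Yhᴴ r = 0 := (aux_ker Yh r).mpr (hYh ▸ hr)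
  have hQr : Matrix.toEuclideanLin (Xh * W * Yhᴴ) r = 0 := by
    have : Matrix.toEuclideanLin (Xh * W * Yhᴴ) r
        = Matrix.toEuclideanLin (Xh * W) (Matrix.toEuclideanLin Yhᴴ r) := by
      rw [aux_mul]; rfl
    rw [this, hYr, map_zero]
  have hQx : Matrix.toEuclideanLin (Xh * W * Yhᴴ) x = x := by
    rw [← hXh] at hx
    obtain ⟨w, rfl⟩ := hx
    have e1 : Matrix.toEuclideanLin (Xh * W * Yhᴴ * Xh) w
        = Matrix.toEuclideanLin (Xh * W * Yhᴴ) (Matrix.toEuclideanLin Xh w) := aux_mul' _ _ _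
    have e2 : Xh * W * Yhᴴ * Xh = Xh := by
      simp only [Matrix.mul_assoc]; exact hXWA
    rw [← e1, e2]
  have hone : ∀ z : EuclideanSpace ℂ (Fin n),
      Matrix.toEuclideanLin (1 : Matrix (Fin n) (Fin n) ℂ) z = z := by
    intro z
    simp [Matrix.toEuclideanLin_apply]
  rw [map_add, map_add, hPr', hPx]
  simp only [map_sub, LinearMap.sub_apply, map_add, hone, hQr, hQx]
  abel
end

section
/- Let A be an n×n complex matrix, and let 𝒳̂, 𝒴̂ ⊆ ℂⁿ be subspaces with 𝒴̂^⊥ ⊕ 𝒳̂ = ℂⁿ, 𝒴̂^⊥ ⊆ im(Aᴴ), and A·𝒴̂^⊥ ∩ 𝒳̂ = {0}. Then the matrix N := P_{𝒳̂,𝒴̂^⊥} + A P_{𝒴̂^⊥,𝒳̂} is invertible, where P_{R,S} denotes the oblique projector onto R along S. -/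
open Matrix

namespace LinearMap

theorem disjoint_ker_range_adjoint {𝕜 E F : Type*} [RCLike 𝕜]
    [NormedAddCommGroup E] [InnerProductSpace 𝕜 E] [FiniteDimensional 𝕜 E]
    [NormedAddCommGroup F] [InnerProductSpace 𝕜 F] [FiniteDimensional 𝕜 F] (f : E →ₗ[𝕜] F) :
    Disjoint (ker f) (range (adjoint f)) := by
  refine Submodule.disjoint_def.mpr fun x (hfx : f x = 0) ⟨y, hy⟩ ↦ ?_
  have : inner 𝕜 x x = 0 := by
    rw [← hy, adjoint_inner_left, hy, hfx, inner_zero_right]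
  exact inner_self_eq_zero.mp this

/-- A kernel vector splits as `(x - p x) + f (p x) = 0` with the summands in `ker p` and
`f (range p)`, so both vanish. -/
theorem ker_one_sub_add_mul_eq_bot {R M : Type*} [Ring R] [AddCommGroup M] [Module R M]
    {p f : Module.End R M} (hp : IsIdempotentElem p)
    (hfp : Disjoint ((range p).map f) (ker p)) (hf : Disjoint (ker f) (range p)) :
    ker (1 - p + f * p) = ⊥ := by
  refine (Submodule.eq_bot_iff _).mpr fun x hx ↦ ?_
  have hsum : (x - p x) + f (p x) = 0 := hx
  have hker : x - p x ∈ ker p := by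
    simp [mem_ker, ← Module.End.mul_apply, hp.eq]
  have himage : x - p x ∈ (range p).map f := by
    rw [eq_neg_of_add_eq_zero_left hsum]
    exact neg_mem (Submodule.mem_map_of_mem (mem_range_self p x))
  have hx_eq : x - p x = 0 := Submodule.disjoint_def.mp hfp _ himage hker
  have hpx : p x = 0 := by
    refine Submodule.disjoint_def.mp hf _ ?_ (mem_range_self p x)
    simpa [hx_eq] using hsum
  simpa [hpx] using hx_eq

end LinearMap

theorem stmt15_general {n : ℕ}
    (A : Matrix (Fin n) (Fin n) ℂ)
    (Xh Yh : Submodule ℂ (EuclideanSpace ℂ (Fin n)))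
    (hYA : Yhᗮ ≤ LinearMap.range (Matrix.toEuclideanLin Aᴴ))
    (hAYX : Submodule.map (Matrix.toEuclideanLin A) (Yhᗮ) ⊓ Xh = ⊥)
    (P : Matrix (Fin n) (Fin n) ℂ)
    (hP : P * P = P ∧ LinearMap.range (Matrix.toEuclideanLin P) = Yhᗮ ∧
      LinearMap.ker (Matrix.toEuclideanLin P) = Xh)
    (N : Matrix (Fin n) (Fin n) ℂ) (hN : N = (1 - P) + A * P) :
    IsUnit N.det := by
  obtain ⟨hPP, hrange, hker⟩ := hP
  have hidem : IsIdempotentElem (toEuclideanLin P) :=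
    (show IsIdempotentElem P from hPP).map (toLpLinAlgEquiv 2)
  have hA : Disjoint (toEuclideanLin A).ker Yhᗮ := by
    refine (LinearMap.disjoint_ker_range_adjoint _).mono_right ?_
    rwa [← toEuclideanLin_conjTranspose_eq_adjoint]
  have hN' : toEuclideanLin N = 1 - toEuclideanLin P + toEuclideanLin A * toEuclideanLin P := by
    change toLpLinAlgEquiv 2 N = _
    simp only [hN, map_add, map_sub, map_one, map_mul]
    rfl
  rw [← LinearMap.det_toLpLin 2, ← LinearMap.isUnit_iff_isUnit_det,
    LinearMap.isUnit_iff_ker_eq_bot, hN']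
  refine LinearMap.ker_one_sub_add_mul_eq_bot hidem ?_ ?_
  · rwa [hrange, hker, disjoint_iff]
  · rwa [hrange]

/-- If `𝒴̂ᗮ ⊕ 𝒳̂ = ℂⁿ`, `𝒴̂ᗮ ⊆ im Aᴴ`, and `A·𝒴̂ᗮ ∩ 𝒳̂ = {0}`,
then `N = P_{𝒳̂,𝒴̂ᗮ} + A P_{𝒴̂ᗮ,𝒳̂}` is invertible. -/
theorem stmt15 {n : ℕ}
    (A : Matrix (Fin n) (Fin n) ℂ)
    (Xh Yh : Submodule ℂ (EuclideanSpace ℂ (Fin n)))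
    (hcompl : Disjoint (Yhᗮ) Xh ∧ Yhᗮ ⊔ Xh = ⊤)
    (hYA : Yhᗮ ≤ LinearMap.range (Matrix.toEuclideanLin Aᴴ))
    (hAYX : Submodule.map (Matrix.toEuclideanLin A) (Yhᗮ) ⊓ Xh = ⊥)
    (P : Matrix (Fin n) (Fin n) ℂ)
    (hP : P * P = P ∧ LinearMap.range (Matrix.toEuclideanLin P) = Yhᗮ ∧
      LinearMap.ker (Matrix.toEuclideanLin P) = Xh)
    (N : Matrix (Fin n) (Fin n) ℂ) (hN : N = (1 - P) + A * P) :
    IsUnit N.det :=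
  stmt15_general A Xh Yh hYA hAYX P hP N hN
end

section
/- Let M be a square n×n complex matrix with ind(M) = 1 and rank r. Let U be an n×r matrix whose columns are an orthonormal basis of ker(M)^⊥. Then the pseudo-determinant of M (the product of its nonzero eigenvalues, counted with algebraic multiplicity) equals det(Uᴴ M U), and Uᴴ M U is invertible. -/
/-!
Since `im U = (ker M)ᗮ` and `Uᴴ U = 1`, the product `U Uᴴ` is the orthogonal projection onto
`(ker M)ᗮ`, so `M = (M U) Uᴴ`. As `charpoly (A B)` and `charpoly (B A)` differ only by a power
of `X`, this gives `charpoly M = X ^ (n - r) * charpoly (Uᴴ M U)`. Moreover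
`M² = (M U) (Uᴴ M U) Uᴴ`, so the `r × r` matrix `Uᴴ M U` has rank at least
`rank M² = rank M = r` and is invertible. Hence the nonzero roots of `charpoly M` are exactly the
roots of `charpoly (Uᴴ M U)`, whose product is its determinant.
-/

open Matrix
open scoped Classical

/-- The pseudo-determinant: the product of the nonzero eigenvalues of `M`
(roots of the characteristic polynomial over `ℂ`, with algebraic multiplicity);
the empty product is `1`. -/
noncomputable def pdet {n : ℕ} (M : Matrix (Fin n) (Fin n) ℂ) : ℂ :=
  (M.charpoly.roots.filter (fun z => z ≠ 0)).prod

open Polynomial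

namespace Matrix

variable {K R 𝕜 l m n : Type*} [Fintype m] [Fintype n] [DecidableEq m]

theorem isUnit_of_card_le_rank [Field K] {A : Matrix m m K} (h : Fintype.card m ≤ A.rank) :
    IsUnit A := by
  rw [← mulVec_surjective_iff_isUnit, ← coe_mulVecLin, ← LinearMap.range_eq_top]
  refine Submodule.eq_top_of_finrank_eq (le_antisymm (Submodule.finrank_le _) ?_)
  rwa [Module.finrank_fintype_fun_eq_card]

theorem isUnit_det_mul_of_card_le_rank_mul_self [Field K] (A : Matrix n m K) (B : Matrix m n K)
    (h : Fintype.card m ≤ (A * B * (A * B)).rank) : IsUnit (B * A).det := by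
  rw [← isUnit_iff_isUnit_det]
  refine isUnit_of_card_le_rank (h.trans ?_)
  calc (A * B * (A * B)).rank = (A * (B * A) * B).rank := by simp only [Matrix.mul_assoc]
    _ ≤ (A * (B * A)).rank := rank_mul_le_left _ _
    _ ≤ (B * A).rank := rank_mul_le_right _ _

theorem mul_mul_eq_self_of_mul_eq_one [Ring R] [DecidableEq n] (A : Matrix n m R)
    (B : Matrix m n R) (M : Matrix l n R) (hBA : B * A = 1)
    (hker : ∀ x, B *ᵥ x = 0 → M *ᵥ x = 0) : M * A * B = M := by
  refine ext_of_mulVec_single fun i => ?_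
  have hproj : B *ᵥ (A *ᵥ (B *ᵥ Pi.single i 1) - Pi.single i 1) = 0 := by
    rw [mulVec_sub, mulVec_mulVec, hBA, one_mulVec, sub_self]
  have := hker _ hproj
  rwa [mulVec_sub, sub_eq_zero, mulVec_mulVec, mulVec_mulVec] at this

theorem mulVec_eq_zero_of_conjTranspose_mulVec_eq_zero [RCLike 𝕜] [DecidableEq n]
    {U : Matrix n m 𝕜} {M : Matrix n n 𝕜}
    (hU : LinearMap.range (toEuclideanLin U) = (LinearMap.ker (toEuclideanLin M))ᗮ)
    (x : n → 𝕜) (hx : Uᴴ *ᵥ x = 0) : M *ᵥ x = 0 := by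
  have hker : LinearMap.ker (toEuclideanLin Uᴴ) = LinearMap.ker (toEuclideanLin M) := by
    rw [toEuclideanLin_conjTranspose_eq_adjoint, ← LinearMap.orthogonal_range, hU,
      Submodule.orthogonal_orthogonal]
  have hmem : WithLp.toLp 2 x ∈ LinearMap.ker (toEuclideanLin M) := by
    rw [← hker, LinearMap.mem_ker, toLpLin_toLp, toLin'_apply, hx]
    rfl
  rw [LinearMap.mem_ker, toLpLin_toLp] at hmem
  exact congrArg WithLp.ofLp hmem

end Matrix

theorem pdet_eq_det_of_charpoly_eq_X_pow_mul {n : ℕ} {m : Type*} [Fintype m] [DecidableEq m]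
    {M : Matrix (Fin n) (Fin n) ℂ} {A : Matrix m m ℂ} {k : ℕ} (hA : IsUnit A.det)
    (h : M.charpoly = X ^ k * A.charpoly) : pdet M = A.det := by
  have hroots : ∀ z ∈ A.charpoly.roots, z ≠ 0 := by
    rintro z hz rfl
    have hcoeff : A.charpoly.coeff 0 = 0 := by
      rw [coeff_zero_eq_eval_zero]; exact isRoot_of_mem_roots hz
    exact hA.ne_zero (by rw [det_eq_sign_charpoly_coeff, hcoeff, mul_zero])
  rw [pdet, h, roots_mul (mul_ne_zero (monic_X_pow k).ne_zero A.charpoly_monic.ne_zero),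
    roots_X_pow, Multiset.filter_add, Multiset.filter_eq_self.mpr hroots,
    Multiset.filter_eq_nil.mpr (by simp), zero_add, det_eq_prod_roots_charpoly]

/-- If `ind M = 1`, `r = rank M`, and `U` is an orthonormal basis matrix
of `(ker M)ᗮ`, then `Uᴴ M U` is invertible and `pdet M = det (Uᴴ M U)`. -/
theorem stmt16 {n r : ℕ}
    (M : Matrix (Fin n) (Fin n) ℂ)
    (hind : (M * M).rank = M.rank) (hr : r = M.rank)
    (U : Matrix (Fin n) (Fin r) ℂ) (hU : Uᴴ * U = 1)
    (hUrange : LinearMap.range (Matrix.toEuclideanLin U) =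
      (LinearMap.ker (Matrix.toEuclideanLin M))ᗮ) :
    IsUnit (Uᴴ * M * U).det ∧ pdet M = (Uᴴ * M * U).det := by
  have hMUU : M * U * Uᴴ = M := mul_mul_eq_self_of_mul_eq_one U Uᴴ M hU
    (mulVec_eq_zero_of_conjTranspose_mulVec_eq_zero hUrange)
  have hunit : IsUnit (Uᴴ * M * U).det := by
    rw [Matrix.mul_assoc]
    refine isUnit_det_mul_of_card_le_rank_mul_self (M * U) Uᴴ ?_
    rw [hMUU, hind, hr, Fintype.card_fin]
  refine ⟨hunit, pdet_eq_det_of_charpoly_eq_X_pow_mul (k := n - r) hunit ?_⟩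
  have hrn : r ≤ n := hr ▸ M.rank_le_width
  have hchar := charpoly_mul_comm_of_le (M * U) Uᴴ (by simpa using hrn)
  rwa [hMUU, Fintype.card_fin, Fintype.card_fin, ← Matrix.mul_assoc] at hchar
end

section
/- Let Σ be an n×n symmetric positive-definite real matrix and X an n×p real matrix of full column rank. Then det(Σ)·det(XᴴΣ⁻¹X) = det(XᴴX)·det(N), where P := I − X(XᴴX)⁻¹Xᴴ is the orthogonal projection onto im(X)^⊥ and N := I − P + ΣP. -/
/-!
Write `G = YX` and `Q = X G⁻¹ Y`, so that `P = 1 - Q` and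
`1 - P + AP = A (1 + (A⁻¹ - 1) X · G⁻¹ Y)`. Sylvester's identity `det (1 + UV) = det (1 + VU)`
turns the second factor into `det (1 + G⁻¹ (Y A⁻¹ X - G)) = det (G⁻¹ · Y A⁻¹ X)`.
For `A = Σ` and `Y = Xᴴ`, full column rank makes `XᴴX` and `XᴴΣ⁻¹X` positive definite,
hence all determinants involved are nonzero.
-/

open Matrix

namespace Matrix

theorem mulVec_injective_of_rank_eq_card {R m k : Type*} [CommRing R] [Nontrivial R]
    [Fintype k] (X : Matrix m k R) (hX : X.rank = Fintype.card k) :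
    Function.Injective X.mulVec := by
  rw [mulVec_injective_iff, linearIndependent_iff_card_eq_finrank_span, ← hX,
    rank_eq_finrank_span_cols]
  rfl

variable {R : Type*} [CommRing R] {m k : Type*} [Fintype m] [DecidableEq m] [Fintype k]
  [DecidableEq k] {A : Matrix m m R} {X : Matrix m k R} {Y : Matrix k m R}

theorem one_sub_add_mul_eq_mul_one_add (hA : IsUnit A.det) {P : Matrix m m R}
    (hP : P = 1 - X * (Y * X)⁻¹ * Y) :
    1 - P + A * P = A * (1 + (A⁻¹ - 1) * X * ((Y * X)⁻¹ * Y)) := by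
  subst hP
  simp only [Matrix.mul_add, Matrix.mul_sub, Matrix.sub_mul, ← Matrix.mul_assoc,
    mul_nonsing_inv A hA, Matrix.one_mul, Matrix.mul_one]
  abel

theorem det_one_add_inv_sub_one_mul_mul (hYX : IsUnit (Y * X).det) :
    (1 + (A⁻¹ - 1) * X * ((Y * X)⁻¹ * Y)).det = ((Y * X)⁻¹ * (Y * A⁻¹ * X)).det := by
  rw [det_one_add_mul_comm]
  congr 1
  rw [Matrix.mul_assoc, Matrix.sub_mul, Matrix.one_mul, Matrix.mul_sub, Matrix.mul_sub,
    nonsing_inv_mul _ hYX, ← Matrix.mul_assoc Y, Matrix.mul_assoc]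
  abel

theorem det_mul_det_one_sub_add_mul (hA : IsUnit A.det) (hYX : IsUnit (Y * X).det)
    {P : Matrix m m R} (hP : P = 1 - X * (Y * X)⁻¹ * Y) :
    (Y * X).det * (1 - P + A * P).det = A.det * (Y * A⁻¹ * X).det := by
  rw [one_sub_add_mul_eq_mul_one_add hA hP, det_mul, det_one_add_inv_sub_one_mul_mul hYX,
    mul_left_comm, ← det_mul, mul_nonsing_inv_cancel_left _ _ hYX]

end Matrix

/-- For SPD `Σ` and full-column-rank `X`, with
`P = I − X(XᴴX)⁻¹Xᴴ` and `N = I − P + ΣP`, `N` is invertible and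
`det Σ · det (XᴴΣ⁻¹X) = det (XᴴX) · det N`. -/
theorem stmt18 {n p : ℕ}
    (S : Matrix (Fin n) (Fin n) ℝ) (hS : S.PosDef)
    (X : Matrix (Fin n) (Fin p) ℝ) (hX : X.rank = p)
    (P : Matrix (Fin n) (Fin n) ℝ) (hP : P = 1 - X * (Xᴴ * X)⁻¹ * Xᴴ)
    (N : Matrix (Fin n) (Fin n) ℝ) (hN : N = 1 - P + S * P) :
    IsUnit N.det ∧ S.det * (Xᴴ * S⁻¹ * X).det = (Xᴴ * X).det * N.det := by
  have hXinj : Function.Injective X.mulVec :=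
    X.mulVec_injective_of_rank_eq_card (by rw [hX, Fintype.card_fin])
  have hS_unit : IsUnit S.det := hS.det_pos.ne'.isUnit
  have hG_unit : IsUnit (Xᴴ * X).det :=
    (PosDef.conjTranspose_mul_self X hXinj).det_pos.ne'.isUnit
  have hXSX_unit : IsUnit (Xᴴ * S⁻¹ * X).det :=
    (hS.inv.conjTranspose_mul_mul_same hXinj).det_pos.ne'.isUnit
  have hdet : (Xᴴ * X).det * N.det = S.det * (Xᴴ * S⁻¹ * X).det :=
    hN ▸ det_mul_det_one_sub_add_mul hS_unit hG_unit hP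
  exact ⟨isUnit_of_mul_isUnit_right (hdet ▸ hS_unit.mul hXSX_unit), hdet.symm⟩
end
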